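/- Let λ be a complex number with Im √λ > 0 (where √λ denotes the branch of the square root with positive imaginary part on the upper half-plane). For any smooth compactly supported function f on [0,∞), the function u(x) = (i/(2√λ)) ∫₀^∞ (e^{i√λ(x+s)} + e^{i√λ|x−s|}) f(s) ds satisfies −u'' − λu = f on (0,∞) and the Neumann condition u'(0) = 0, and u ∈ L²([0,∞)). -/

import Mathlib

open MeasureTheory Complex Set

/-- For `λ = z²` with `Im z > 0` and `f` smooth compactly supported on `[0,∞)`,
the explicit Neumann-resolvent formula `u` solves `-u'' - λu = f` on `(0,∞)`, satisfies
`u'(0) = 0`, and lies in `L²([0,∞))`. -/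
theorem neumann_resolvent_formula
    (lam z : ℂ) (hz2 : z ^ 2 = lam) (hzim : 0 < z.im)
    (f : ℝ → ℂ) (hf : ContDiff ℝ (⊤ : ℕ∞) f) (hsupp : HasCompactSupport f)
    (u : ℝ → ℂ)
    (hu : ∀ x : ℝ, u x = (Complex.I / (2 * z)) *
      ∫ s in Ioi (0 : ℝ), (Complex.exp (Complex.I * z * ((x : ℂ) + (s : ℂ)))
        + Complex.exp (Complex.I * z * ((|x - s| : ℝ) : ℂ))) * f s) :
    (∀ x ∈ Ioi (0 : ℝ), -(iteratedDeriv 2 u x) - lam * u x = f x) ∧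
    deriv u 0 = 0 ∧
    MemLp u 2 (volume.restrict (Ici (0 : ℝ))) := by
  have hz0 : z ≠ 0 := by
    intro h; rw [h] at hzim; simp at hzim
  have hfc : Continuous f := hf.continuous
  set c : ℂ := Complex.I / (2 * z) with hc
  set P : ℝ → ℂ := fun s => Complex.exp (Complex.I * z * s) * f s with hP
  set Q : ℝ → ℂ := fun s => Complex.exp (-(Complex.I * z * s)) * f s with hQ
  have hPc : Continuous P := by
    simp only [hP]; fun_prop
  have hQc : Continuous Q := by
    simp only [hQ]; fun_prop
  have hPsupp : HasCompactSupport P := hsupp.mul_left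
  have hQsupp : HasCompactSupport Q := hsupp.mul_left
  have hPint : Integrable P := hPc.integrable_of_hasCompactSupport hPsupp
  have hQint : Integrable Q := hQc.integrable_of_hasCompactSupport hQsupp
  set A : ℂ := ∫ s in Ioi (0:ℝ), P s with hA
  set F : ℝ → ℂ := fun x => ∫ s in (0:ℝ)..x, Q s with hF
  set H : ℝ → ℂ := fun x => ∫ s in (0:ℝ)..x, P s with hH
  set v : ℝ → ℂ := fun x =>
    c * (Complex.exp (Complex.I*z*x) * (A + F x)
      + Complex.exp (-(Complex.I*z*x)) * (A - H x)) with hv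
  set w : ℝ → ℂ := fun x =>
    c * (Complex.I*z) * (Complex.exp (Complex.I*z*x) * (A + F x)
      - Complex.exp (-(Complex.I*z*x)) * (A - H x)) with hw
  have hsplitA : ∀ x : ℝ, 0 ≤ x → A = H x + ∫ s in Ioi x, P s := by
    intro x hx
    simp only [hA, hH]
    rw [intervalIntegral.integral_of_le hx, ← Ioc_union_Ioi_eq_Ioi hx,
      setIntegral_union (Ioc_disjoint_Ioi le_rfl) measurableSet_Ioi
        hPint.integrableOn hPint.integrableOn]
  -- u = v on [0, ∞)
  have huv : ∀ x : ℝ, 0 ≤ x → u x = v x := by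
    intro x hx
    have habs : Integrable (fun s : ℝ => Complex.exp (Complex.I*z*((|x - s| : ℝ):ℂ)) * f s) := by
      have hcont : Continuous (fun s : ℝ => Complex.exp (Complex.I*z*((|x - s| : ℝ):ℂ))) := by
        fun_prop
      exact (hcont.mul hfc).integrable_of_hasCompactSupport hsupp.mul_left
    have hsum :
        (∫ s in Ioi (0:ℝ), (Complex.exp (Complex.I * z * ((x : ℂ) + (s : ℂ)))
          + Complex.exp (Complex.I * z * ((|x - s| : ℝ) : ℂ))) * f s)
        = (∫ s in Ioi (0:ℝ), Complex.exp (Complex.I*z*x) * P s)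
          + ∫ s in Ioi (0:ℝ), Complex.exp (Complex.I*z*((|x-s|:ℝ):ℂ)) * f s := by
      rw [← integral_add ((hPint.const_mul _).integrableOn) habs.integrableOn]
      apply setIntegral_congr_fun measurableSet_Ioi
      intro s _
      simp only [hP]
      rw [mul_add (Complex.I*z), Complex.exp_add]
      ring
    have hsplit : (∫ s in Ioi (0:ℝ), Complex.exp (Complex.I*z*((|x-s|:ℝ):ℂ)) * f s)
        = (∫ s in Ioc 0 x, Complex.exp (Complex.I*z*((|x-s|:ℝ):ℂ)) * f s)
          + (∫ s in Ioi x, Complex.exp (Complex.I*z*((|x-s|:ℝ):ℂ)) * f s) := by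
      rw [← Ioc_union_Ioi_eq_Ioi hx,
        setIntegral_union (Ioc_disjoint_Ioi le_rfl) measurableSet_Ioi
          habs.integrableOn habs.integrableOn]
    have hIoc : (∫ s in Ioc 0 x, Complex.exp (Complex.I*z*((|x-s|:ℝ):ℂ)) * f s)
        = Complex.exp (Complex.I*z*x) * F x := by
      have hFx : F x = ∫ s in Ioc 0 x, Q s := by
        simp only [hF]; exact intervalIntegral.integral_of_le hx
      rw [hFx, ← integral_const_mul]
      apply setIntegral_congr_fun measurableSet_Ioc
      intro s hs
      simp only [hQ]
      rw [_root_.abs_of_nonneg (by linarith [hs.2] : (0:ℝ) ≤ x - s)]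
      push_cast
      rw [show Complex.I*z*((x:ℂ)-(s:ℂ)) = Complex.I*z*x + -(Complex.I*z*s) by ring,
        Complex.exp_add]
      ring
    have hIoi : (∫ s in Ioi x, Complex.exp (Complex.I*z*((|x-s|:ℝ):ℂ)) * f s)
        = Complex.exp (-(Complex.I*z*x)) * (A - H x) := by
      have hAH : A - H x = ∫ s in Ioi x, P s := by
        rw [hsplitA x hx]; ring
      rw [hAH, ← integral_const_mul]
      apply setIntegral_congr_fun measurableSet_Ioi
      intro s hs
      simp only [hP]
      rw [_root_.abs_of_nonpos (by linarith [mem_Ioi.mp hs] : x - s ≤ 0)]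
      push_cast
      rw [show Complex.I*z*(-((x:ℂ)-(s:ℂ))) = -(Complex.I*z*x) + Complex.I*z*s by ring,
        Complex.exp_add]
      ring
    rw [hu x, hsum, hsplit, hIoc, hIoi, integral_const_mul, ← hA]
    simp only [hv]
    ring
  -- u on (-∞, 0]
  have hneg : ∀ x : ℝ, x ≤ 0 →
      u x = c * ((Complex.exp (Complex.I*z*x) + Complex.exp (-(Complex.I*z*x))) * A) := by
    intro x hx
    rw [hu x]
    congr 1
    rw [hA, ← integral_const_mul]
    apply setIntegral_congr_fun measurableSet_Ioi
    intro s hs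
    simp only [hP]
    rw [_root_.abs_of_nonpos (by linarith [mem_Ioi.mp hs] : x - s ≤ 0)]
    push_cast
    rw [show Complex.I*z*((x:ℂ)+(s:ℂ)) = Complex.I*z*x + Complex.I*z*s by ring,
      show Complex.I*z*(-((x:ℂ)-(s:ℂ))) = -(Complex.I*z*x) + Complex.I*z*s by ring,
      Complex.exp_add, Complex.exp_add]
    ring
  -- derivatives of the primitives
  have hFd : ∀ x : ℝ, HasDerivAt F (Q x) x := by
    intro x
    simp only [hF]
    exact intervalIntegral.integral_hasDerivAt_right (hQint.intervalIntegrable)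
      (hQc.stronglyMeasurableAtFilter _ _) hQc.continuousAt
  have hHd : ∀ x : ℝ, HasDerivAt H (P x) x := by
    intro x
    simp only [hH]
    exact intervalIntegral.integral_hasDerivAt_right (hPint.intervalIntegrable)
      (hPc.stronglyMeasurableAtFilter _ _) hPc.continuousAt
  -- derivatives of the exponentials
  have hE : ∀ x : ℝ, HasDerivAt (fun y : ℝ => Complex.exp (Complex.I*z*y))
      (Complex.I*z*Complex.exp (Complex.I*z*x)) x := by
    intro x
    have h1 : HasDerivAt (fun y : ℂ => Complex.exp (Complex.I*z*y))
        (Complex.exp (Complex.I*z*x) * (Complex.I*z)) ((x:ℝ):ℂ) := by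
      simpa using ((hasDerivAt_id ((x:ℝ):ℂ)).const_mul (Complex.I*z)).cexp
    have := h1.comp_ofReal
    convert this using 1
    ring
  have hE' : ∀ x : ℝ, HasDerivAt (fun y : ℝ => Complex.exp (-(Complex.I*z*y)))
      (-(Complex.I*z)*Complex.exp (-(Complex.I*z*x))) x := by
    intro x
    have h1 : HasDerivAt (fun y : ℂ => Complex.exp (-(Complex.I*z*y)))
        (Complex.exp (-(Complex.I*z*x)) * (-(Complex.I*z))) ((x:ℝ):ℂ) := by
      simpa using (((hasDerivAt_id ((x:ℝ):ℂ)).const_mul (Complex.I*z)).neg).cexp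
    have := h1.comp_ofReal
    convert this using 1
    ring
  have hvd : ∀ x : ℝ, HasDerivAt v (w x) x := by
    intro x
    have h1 := (hE x).mul ((hasDerivAt_const x A).add (hFd x))
    have h2 := (hE' x).mul ((hasDerivAt_const x A).sub (hHd x))
    have h3 := (h1.add h2).const_mul c
    simp only [hv, hw]
    convert h3 using 1
    case e'_4 => rfl
    · rfl
    simp only [hP, hQ, Pi.add_apply, Pi.sub_apply]
    ring
  have hee : ∀ x : ℝ, Complex.exp (Complex.I*z*x) * Complex.exp (-(Complex.I*z*x)) = 1 := by
    intro x; rw [← Complex.exp_add]; simp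
  have hc2 : 2 * c * (Complex.I * z) = -1 := by
    have h2z : (2:ℂ) * z ≠ 0 := mul_ne_zero two_ne_zero hz0
    rw [hc]
    field_simp
    linear_combination Complex.I_sq
  have hwd : ∀ x : ℝ, HasDerivAt w (-lam * v x - f x) x := by
    intro x
    have h1 := (hE x).mul ((hasDerivAt_const x A).add (hFd x))
    have h2 := (hE' x).mul ((hasDerivAt_const x A).sub (hHd x))
    have h3 := (h1.sub h2).const_mul (c * (Complex.I*z))
    simp only [hw, hv]
    convert h3 using 1
    case e'_4 => rfl
    · rfl
    simp only [hP, hQ, Pi.add_apply, Pi.sub_apply]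
    rw [← hz2]
    linear_combination (-(c * z^2) * (Complex.exp (Complex.I*z*x) * (A + F x)
        + Complex.exp (-(Complex.I*z*x)) * (A - H x))) * Complex.I_sq
      + (-(f x) * (2 * c * (Complex.I*z))) * hee x
      + (-(f x)) * hc2
  -- u has derivative w on (0, ∞)
  have hud : ∀ y : ℝ, y ∈ Ioi (0:ℝ) → HasDerivAt u (w y) y := by
    intro y hy
    apply (hvd y).congr_of_eventuallyEq
    filter_upwards [Ioi_mem_nhds hy] with t ht using huv t (le_of_lt ht)
  refine ⟨?_, ?_, ?_⟩
  · -- the ODE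
    intro x hx
    have hdw : deriv u =ᶠ[nhds x] w := by
      filter_upwards [Ioi_mem_nhds hx] with y hy using (hud y hy).deriv
    have h2d : iteratedDeriv 2 u x = -lam * v x - f x := by
      rw [show (2:ℕ) = 1 + 1 from rfl, iteratedDeriv_succ, iteratedDeriv_one,
        hdw.deriv_eq]
      exact (hwd x).deriv
    rw [h2d, huv x (le_of_lt hx)]
    ring
  · -- Neumann condition
    have hF0 : F 0 = 0 := by simp [hF]
    have hH0 : H 0 = 0 := by simp [hH]
    have hw0 : w 0 = 0 := by
      simp only [hw, hF0, hH0]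
      norm_num
    have hRd : HasDerivWithinAt u 0 (Ici (0:ℝ)) 0 := by
      have h := ((hvd 0).hasDerivWithinAt (s := Ici (0:ℝ)))
      rw [hw0] at h
      exact h.congr (fun y hy => huv y hy) (huv 0 le_rfl)
    have hLd : HasDerivWithinAt u 0 (Iic (0:ℝ)) 0 := by
      have hD : HasDerivAt
          (fun y : ℝ => c * ((Complex.exp (Complex.I*z*y) + Complex.exp (-(Complex.I*z*y))) * A))
          0 0 := by
        have h := (((hE 0).add (hE' 0)).mul_const A).const_mul c
        convert h using 1
        case e'_4 => rfl
        norm_num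
        rw [Complex.ofReal_zero, mul_zero, neg_zero, Complex.exp_zero]; ring
      exact hD.hasDerivWithinAt.congr (fun y hy => hneg y hy) (hneg 0 le_rfl)
    have hD0 : HasDerivAt u 0 0 := by
      have h := hLd.union hRd
      rw [Iic_union_Ici] at h
      exact hasDerivWithinAt_univ.mp h
    exact hD0.deriv
  · -- L² bound
    obtain ⟨r, hr⟩ := hsupp.isBounded.subset_closedBall 0
    set R : ℝ := |r| + 1 with hR
    have hR0 : (0:ℝ) ≤ R := by positivity
    have hfR : ∀ s : ℝ, R ≤ s → f s = 0 := by
      intro s hs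
      apply image_eq_zero_of_notMem_tsupport
      intro hmem
      have := hr hmem
      rw [Metric.mem_closedBall, Real.dist_eq, sub_zero] at this
      have h1 : s ≤ |s| := le_abs_self s
      have h2 : r ≤ |r| := le_abs_self r
      linarith
    have hPR : ∀ s : ℝ, R ≤ s → P s = 0 := by
      intro s hs; simp only [hP]; rw [hfR s hs, mul_zero]
    have hQR : ∀ s : ℝ, R ≤ s → Q s = 0 := by
      intro s hs; simp only [hQ]; rw [hfR s hs, mul_zero]
    have hFR : ∀ x : ℝ, R ≤ x → F x = F R := by
      intro x hx
      simp only [hF]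
      rw [← intervalIntegral.integral_add_adjacent_intervals
        (hQint.intervalIntegrable) (hQint.intervalIntegrable)]
      have hz' : (∫ s in R..x, Q s) = 0 := by
        rw [intervalIntegral.integral_congr (g := fun _ => (0:ℂ)) ?_]
        · simp
        · intro s hs
          rw [uIcc_of_le hx] at hs
          exact hQR s hs.1
      rw [hz', add_zero]
    have hHR : ∀ x : ℝ, R ≤ x → A - H x = 0 := by
      intro x hx
      rw [hsplitA x (le_trans hR0 hx)]
      have : (∫ s in Ioi x, P s) = 0 := by
        apply setIntegral_eq_zero_of_forall_eq_zero
        intro s hs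
        exact hPR s (le_trans hx (le_of_lt (mem_Ioi.mp hs)))
      rw [this]
      ring
    have hvK : ∀ x : ℝ, R ≤ x →
        v x = (c * (A + F R)) * Complex.exp (Complex.I*z*x) := by
      intro x hx
      simp only [hv]
      rw [hFR x hx, hHR x hx, mul_zero, add_zero]
      ring
    have hFcont : Continuous F :=
      continuous_iff_continuousAt.mpr fun x => (hFd x).continuousAt
    have hHcont : Continuous H :=
      continuous_iff_continuousAt.mpr fun x => (hHd x).continuousAt
    have hvc : Continuous v := by
      simp only [hv]
      exact continuous_const.mul
        ((((continuous_const.mul Complex.continuous_ofReal).cexp).mul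
          (continuous_const.add hFcont)).add
        ((((continuous_const.mul Complex.continuous_ofReal).neg).cexp).mul
          (continuous_const.sub hHcont)))
    have huae : u =ᵐ[volume.restrict (Ici (0:ℝ))] v := by
      filter_upwards [ae_restrict_mem measurableSet_Ici] with x hx using huv x hx
    apply MemLp.ae_eq huae.symm
    rw [memLp_two_iff_integrable_sq_norm (hvc.aestronglyMeasurable)]
    have hsub : Ici (0:ℝ) ⊆ Icc 0 R ∪ Ioi R := by
      intro t ht
      rcases le_or_gt t R with h | h
      · exact Or.inl ⟨ht, h⟩
      · exact Or.inr h
    have h1 : IntegrableOn (fun x => ‖v x‖^2) (Icc 0 R) := by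
      exact (hvc.norm.pow 2).integrableOn_Icc
    have h2 : IntegrableOn (fun x => ‖v x‖^2) (Ioi R) := by
      have hb2 : (0:ℝ) < 2 * z.im := by linarith
      have hint : IntegrableOn
          (fun x => ‖c * (A + F R)‖^2 * Real.exp (-(2 * z.im) * x)) (Ioi R) :=
        (exp_neg_integrableOn_Ioi R hb2).const_mul _
      apply hint.congr_fun ?_ measurableSet_Ioi
      intro x hx
      show ‖c * (A + F R)‖^2 * Real.exp (-(2 * z.im) * x) = ‖v x‖^2
      rw [hvK x (le_of_lt (mem_Ioi.mp hx))]
      rw [norm_mul]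
      simp only [norm_mul, Complex.norm_exp]
      have hre : (Complex.I * z * (x:ℂ)).re = -z.im * x := by
        simp [Complex.mul_re, Complex.mul_im]
      rw [hre, mul_pow, mul_pow, pow_two (Real.exp (-z.im * x)), ← Real.exp_add]
      ring_nf
    exact ((h1.union h2).mono_set hsub)
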